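/- arXiv:2308.13898 — 6 statements merged into one kernel-verified Lean document; each statement's English description precedes it below -/
import Mathlib

section
/- For any node v of a finite DAG G and any topological schedule σ, and for any integer j with |anc(v)| < j ≤ |V| − |des(v)|, there exists a topological schedule σ' with σ'(v) = j. In other words, the bounds |anc(v)| < σ(v) ≤ |V| − |des(v)| on the scheduling position of v are tight. -/
/-!
Reachability makes the DAG a finite partial order in which the ancestors and descendants of `v`
are `Set.Iio v` and `Set.Ioi v`. Between the lower sets `Iio v` and `(Ici v)ᶜ` there is a lower
set `u` of every intermediate size, obtained by peeling off maximal elements one at a time; take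
`#u = j - 1`. Sorting lexicographically by the key "in `u`, then `v`, then the rest" and then by
an arbitrary linear extension gives a topological order with exactly `u` before `v`.
-/

/-- `<` is definitionally `Relation.TransGen E`. -/
abbrev reachabilityOrder {V : Type*} (E : V → V → Prop)
    (hacyc : ∀ v : V, ¬ Relation.TransGen E v v) : PartialOrder V where
  le := Relation.ReflTransGen E
  lt := Relation.TransGen E
  le_refl _ := .refl
  le_trans _ _ _ := .trans
  lt_iff_le_not_ge a b := by
    refine ⟨fun h => ⟨h.to_reflTransGen, fun h' => hacyc a (h.trans_left h')⟩, fun ⟨h, h'⟩ => ?_⟩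
    rcases Relation.reflTransGen_iff_eq_or_transGen.1 h with rfl | h
    · exact absurd .refl h'
    · exact h
  le_antisymm a b hab hba := by
    rcases Relation.reflTransGen_iff_eq_or_transGen.1 hab with rfl | hab
    · rfl
    · exact absurd (hab.trans_left hba) (hacyc a)

namespace Set

variable {α : Type*} [PartialOrder α]

lemma isLowerSet_sdiff_singleton_of_maximal {s t : Set α} {m : α} (hs : IsLowerSet s)
    (ht : IsLowerSet t) (hm : Maximal (· ∈ t \ s) m) : IsLowerSet (t \ {m}) := by
  rintro x y hyx ⟨hxt, hxm⟩
  refine ⟨ht hyx hxt, ?_⟩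
  rintro rfl
  have hxs : x ∉ s := fun hxs => hm.1.2 (hs hyx hxs)
  exact hxm (le_antisymm (hm.2 ⟨hxt, hxs⟩ hyx) hyx)

theorem exists_isLowerSet_between_ncard_eq [Finite α] {s t : Set α} (hs : IsLowerSet s)
    (ht : IsLowerSet t) (hst : s ⊆ t) {k : ℕ} (hsk : s.ncard ≤ k) (hkt : k ≤ t.ncard) :
    ∃ u : Set α, IsLowerSet u ∧ s ⊆ u ∧ u ⊆ t ∧ u.ncard = k := by
  obtain ⟨d, hd⟩ := Nat.exists_eq_add_of_le hkt
  induction d generalizing t with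
  | zero => exact ⟨t, ht, hst, subset_rfl, hd⟩
  | succ d ih =>
    have hne : (t \ s).Nonempty := by
      rw [nonempty_iff_ne_empty, Ne, sdiff_eq_empty]
      intro hts
      have := ncard_le_ncard hts
      omega
    obtain ⟨m, hm⟩ := (toFinite _).exists_maximal hne
    have hcard := ncard_sdiff_singleton_add_one hm.1.1
    obtain ⟨u, hu, hsu, hut, hu_card⟩ := ih (isLowerSet_sdiff_singleton_of_maximal hs ht hm)
      (fun x hx => ⟨hst hx, fun hxm => hm.1.2 (hxm ▸ hx)⟩) (by omega) (by omega)
    exact ⟨u, hu, hsu, hut.trans sdiff_subset, hu_card⟩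

end Set

lemma Equiv.val_eq_ncard_lt {α : Type*} {n : ℕ} (e : α ≃ Fin n) (a : α) :
    (e a : ℕ) = {x | e x < e a}.ncard := by
  calc (e a : ℕ) = (Finset.Iio (e a)).card := (Fin.card_Iio _).symm
    _ = (Set.Iio (e a)).ncard := by rw [← Finset.coe_Iio, Set.ncard_coe_finset]
    _ = (e ⁻¹' Set.Iio (e a)).ncard :=
      (Set.ncard_preimage_of_injective_subset_range e.injective (by simp)).symm

lemma exists_equiv_fin_lt_iff_lt {α γ : Type*} [Fintype α] [LinearOrder γ] (g : α → γ)
    (hg : Function.Injective g) :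
    ∃ e : α ≃ Fin (Fintype.card α), ∀ a b, e a < e b ↔ g a < g b := by
  let _ := LinearOrder.lift' g hg
  exact ⟨(monoEquivOfFin α rfl).symm.toEquiv, fun a b => (monoEquivOfFin α rfl).symm.lt_iff_lt⟩

theorem exists_strictMono_equiv_fin_of_monotone {α β : Type*} [Fintype α] [PartialOrder α]
    [LinearOrder β] {f : α → β} (hf : Monotone f) :
    ∃ e : α ≃ Fin (Fintype.card α), StrictMono e ∧ ∀ a b, f a < f b → e a < e b := by
  let g : α → β ×ₗ LinearExtension α := fun a => toLex (f a, toLinearExtension a)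
  have hL : StrictMono (toLinearExtension : α → LinearExtension α) :=
    toLinearExtension.monotone.strictMono_of_injective fun _ _ h => h
  obtain ⟨e, he⟩ := exists_equiv_fin_lt_iff_lt g fun a b h => congrArg (·.2) (toLex.injective h)
  refine ⟨e, fun a b hab => (he a b).2 ?_, fun a b hab => (he a b).2 ?_⟩
  · exact Prod.Lex.toLex_strictMono (Prod.lt_iff.2 (.inr ⟨hf hab.le, hL hab⟩))
  · exact Prod.Lex.toLex_lt_toLex.2 (.inl hab)

theorem exists_strictMono_equiv_fin_apply_eq {α : Type*} [Fintype α] [PartialOrder α] (v : α)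
    {k : ℕ} (hk₁ : (Set.Iio v).ncard ≤ k) (hk₂ : k + (Set.Ioi v).ncard < Fintype.card α) :
    ∃ e : α ≃ Fin (Fintype.card α), StrictMono e ∧ (e v : ℕ) = k := by
  classical
  have hcompl : (Set.Ici v)ᶜ.ncard + ((Set.Ioi v).ncard + 1) = Fintype.card α := by
    rw [← Set.ncard_insert_of_notMem (s := Set.Ioi v) (lt_irrefl v), Set.Ioi_insert,
      Set.ncard_compl_add_ncard, Nat.card_eq_fintype_card]
  obtain ⟨u, hu, hIio_u, hu_le, hu_card⟩ :=
    Set.exists_isLowerSet_between_ncard_eq (t := (Set.Ici v)ᶜ) (isLowerSet_Iio v)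
      (isUpperSet_Ici v).compl (fun _ hx => not_le_of_gt hx) hk₁ (by omega)
  have hvu : v ∉ u := fun h => hu_le h le_rfl
  let f : α → ℕ := fun x => if x ∈ u then 0 else if x = v then 1 else 2
  have hf : Monotone f := by
    intro a b hab
    simp only [f]
    split_ifs <;> first | omega | skip
    · exact absurd (hu hab ‹b ∈ u›) ‹a ∉ u›
    · exact absurd (hu hab ‹b ∈ u›) ‹a ∉ u›
    · exact absurd (hIio_u (lt_of_le_of_ne (‹b = v› ▸ hab) ‹¬a = v›)) ‹a ∉ u›
  obtain ⟨e, he, hfe⟩ := exists_strictMono_equiv_fin_of_monotone hf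
  refine ⟨e, he, ?_⟩
  have hpos : {x | e x < e v} = u := by
    ext x
    refine ⟨fun hx => ?_, fun hx => hfe x v (by simp [f, hx, hvu])⟩
    by_contra hxu
    rcases eq_or_ne x v with rfl | hxv
    · exact lt_irrefl (e x) hx
    · exact (hfe v x (by simp [f, hxu, hxv, hvu])).not_gt hx
  rw [e.val_eq_ncard_lt, hpos, hu_card]

/-- Tightness of the position bounds. For any node `v` of a finite
DAG and any `j` with `|anc(v)| < j ≤ |V| − |des(v)|`, there is a topological
schedule `σ'` placing `v` at position `j` (positions in `{1,...,|V|}`,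
represented via `Fin` with position `(σ' v) + 1`). -/
theorem stmt_2 {V : Type*} [Fintype V] (E : V → V → Prop)
    (hacyc : ∀ v : V, ¬ Relation.TransGen E v v) (v : V) (j : ℕ)
    (hj1 : {u : V | Relation.TransGen E u v}.ncard < j)
    (hj2 : j ≤ Fintype.card V - {u : V | Relation.TransGen E v u}.ncard) :
    ∃ σ' : V ≃ Fin (Fintype.card V),
      (∀ u w : V, E u w → (σ' u : ℕ) < (σ' w : ℕ)) ∧ (σ' v : ℕ) + 1 = j := by
  let _ := reachabilityOrder E hacyc
  have hanc : (Set.Iio v).ncard < j := hj1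
  have hdes : j ≤ Fintype.card V - (Set.Ioi v).ncard := hj2
  obtain ⟨σ', hσ', hv⟩ := exists_strictMono_equiv_fin_apply_eq v (k := j - 1) (by omega) (by omega)
  exact ⟨σ', fun u w huw => hσ' (Relation.TransGen.single huw), by omega⟩
end

section
/- Let g be a subgraph scheduled as a contiguous block with transient footprints t⁰, t¹, ..., tⁿ satisfying tⁱ ≥ t⁰ and tⁱ ≥ tⁿ for all 1 ≤ i < n (intermediate transient footprint never dips below input or output transient footprint). Let Y be a set of parallel operators with stable footprints s_y. Then for any interleaving of the operators of g with the operators of Y, the peak memory (max over all steps of stable footprint of the executing operator plus the transient footprint of the other side) is at least the peak memory of the schedule that executes all of g contiguously, either entirely before or entirely after each y ∈ Y. Hence fusing g into a single hypernode preserves the optimal peak memory. -/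
/-- Number of `g`-steps (true) among positions `≤ t` (inclusive). -/
def countG {N : ℕ} (b : Fin N → Bool) (t : Fin N) : ℕ :=
  (Finset.univ.filter (fun t' : Fin N => t' ≤ t ∧ b t' = true)).card

/-- Number of `Y`-steps (false) among positions `≤ t` (inclusive). -/
def countY {N : ℕ} (b : Fin N → Bool) (t : Fin N) : ℕ :=
  (Finset.univ.filter (fun t' : Fin N => t' ≤ t ∧ b t' = false)).card

/-- Number of `g`-steps strictly before position `t`. -/
def countGBefore {N : ℕ} (b : Fin N → Bool) (t : Fin N) : ℕ :=
  (Finset.univ.filter (fun t' : Fin N => t' < t ∧ b t' = true)).card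

/-- Number of `Y`-steps strictly before position `t`. -/
def countYBefore {N : ℕ} (b : Fin N → Bool) (t : Fin N) : ℕ :=
  (Finset.univ.filter (fun t' : Fin N => t' < t ∧ b t' = false)).card

/-- Global stable footprint at position `t` of an interleaving `b` of the
sequence `g` (stable footprints `sg`, transient `tg`) with the parallel
operators `Y` (stable footprints `sy`, transient `ty`): when `g` executes, it is
`s_g^i + t_y^k`; when `y` executes, it is `s_y^k + t_g^i`. -/
def stableAt {N : ℕ} (sg tg sy ty : ℕ → ℝ) (b : Fin N → Bool) (t : Fin N) : ℝ :=
  if b t then sg (countG b t) + ty (countYBefore b t)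
  else sy (countY b t) + tg (countGBefore b t)

/-- Peak memory of an interleaving: max over all steps of the stable footprint. -/
noncomputable def peakMem {N : ℕ} (sg tg sy ty : ℕ → ℝ) (b : Fin N → Bool) : ℝ :=
  ⨆ t : Fin N, stableAt sg tg sy ty b t

/-- The `g`-steps form a contiguous block. -/
def contiguous {N : ℕ} (b : Fin N → Bool) : Prop :=
  ∀ t1 t2 t3 : Fin N, t1 ≤ t2 → t2 ≤ t3 → b t1 = true → b t3 = true → b t2 = true

/-!
Among the `g`-steps of the given interleaving pick a pivot at which the transient footprint
`ty k` of the `Y`-side (with `k` the number of `y`'s already executed) is smallest, and run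
`y₁, …, y_k`, then all of `g`, then the remaining `y`'s. Every `g`-step now sees `ty k`, which is no
more than what it saw before. The `y`'s of the first group preceded the pivot, so each of them saw
fewer than `n` finished `g`-operators and hence a transient footprint `≥ tg 0`, which is what it
sees now; those of the second group followed the pivot, saw between `1` and `n` finished
`g`-operators and hence a transient footprint `≥ tg n`. So every step of the new schedule is
dominated by a step of the old one.
-/

open Finset

section Counting

variable {N : ℕ} (b : Fin N → Bool)

lemma card_filter_fin_eq_card {p : Fin N → Prop} [DecidablePred p] {s : Finset ℕ}
    (hs : ∀ v ∈ s, v < N) (h : ∀ t : Fin N, p t ↔ ↑t ∈ s) : #{t | p t} = #s := by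
  rw [← card_attachFin s hs]
  congr 1
  ext t
  simp [h]

lemma countY_eq_countG_not (t : Fin N) : countY b t = countG (fun x => !b x) t := by
  simp [countY, countG]

lemma countYBefore_eq_countGBefore_not (t : Fin N) :
    countYBefore b t = countGBefore (fun x => !b x) t := by
  simp [countYBefore, countGBefore]

lemma card_filter_eq_false : #{t | b t = false} = N - #{t | b t = true} := by
  have := card_filter_add_card_filter_not (s := (univ : Finset (Fin N))) (fun t => b t = true)
  simp only [Bool.not_eq_true, card_univ, Fintype.card_fin] at this
  omega

lemma countG_eq_card_filter_Iic (t : Fin N) : countG b t = #{t' ∈ Iic t | b t' = true} := by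
  simp only [countG]
  congr 1
  ext
  simp

lemma countGBefore_eq_card_filter_Iio (t : Fin N) :
    countGBefore b t = #{t' ∈ Iio t | b t' = true} := by
  simp only [countGBefore]
  congr 1
  ext
  simp

lemma countG_add_countY (t : Fin N) : countG b t + countY b t = t + 1 := by
  rw [countY_eq_countG_not, countG_eq_card_filter_Iic, countG_eq_card_filter_Iic, ← Fin.card_Iic,
    ← card_filter_add_card_filter_not (s := Iic t) (fun t' => b t' = true)]
  simp

lemma countGBefore_add_countYBefore (t : Fin N) :
    countGBefore b t + countYBefore b t = t := by
  rw [countYBefore_eq_countGBefore_not, countGBefore_eq_card_filter_Iio,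
    countGBefore_eq_card_filter_Iio, ← Fin.card_Iio,
    ← card_filter_add_card_filter_not (s := Iio t) (fun t' => b t' = true)]
  simp

lemma countG_eq_countGBefore_add_one {t : Fin N} (h : b t = true) :
    countG b t = countGBefore b t + 1 := by
  rw [countG_eq_card_filter_Iic, countGBefore_eq_card_filter_Iio, ← Iio_insert, filter_insert,
    if_pos h, card_insert_of_notMem (by simp)]

lemma countG_le_countGBefore {u v : Fin N} (h : u < v) : countG b u ≤ countGBefore b v :=
  card_le_card fun x hx => by
    simp only [mem_filter, mem_univ, true_and] at hx ⊢
    exact ⟨hx.1.trans_lt h, hx.2⟩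

lemma countGBefore_mono {u v : Fin N} (h : u ≤ v) : countGBefore b u ≤ countGBefore b v :=
  card_le_card fun x hx => by
    simp only [mem_filter, mem_univ, true_and] at hx ⊢
    exact ⟨hx.1.trans_le h, hx.2⟩

lemma countG_le_card (t : Fin N) : countG b t ≤ #{t | b t = true} :=
  card_le_card fun x hx => by
    simp only [mem_filter, mem_univ, true_and] at hx ⊢
    exact hx.2

lemma countGBefore_le_card (t : Fin N) : countGBefore b t ≤ #{t | b t = true} :=
  card_le_card fun x hx => by
    simp only [mem_filter, mem_univ, true_and] at hx ⊢
    exact hx.2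

lemma countYBefore_le_card (t : Fin N) : countYBefore b t ≤ #{t | b t = false} := by
  simpa [countYBefore_eq_countGBefore_not] using countGBefore_le_card (fun x => !b x) t

lemma exists_countG_eq {r : ℕ} (hr : 1 ≤ r) (hrb : r ≤ #{t | b t = true}) :
    ∃ t, b t = true ∧ countG b t = r := by
  set s : Finset (Fin N) := {t | b t = true}
  set e := s.orderEmbOfFin rfl
  let i : Fin #s := ⟨r - 1, by omega⟩
  have hfilter : {t' ∈ Iic (e i) | b t' = true} = (Iic i).map e.toEmbedding := by
    ext x
    simp only [mem_filter, mem_Iic, mem_map, RelEmbedding.coe_toEmbedding]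
    constructor
    · rintro ⟨hle, hx⟩
      obtain ⟨j, rfl⟩ : x ∈ Set.range e := by
        rw [s.range_orderEmbOfFin rfl]
        simpa [s] using hx
      exact ⟨j, e.le_iff_le.1 hle, rfl⟩
    · rintro ⟨j, hj, rfl⟩
      exact ⟨e.le_iff_le.2 hj, (mem_filter.1 (s.orderEmbOfFin_mem rfl j)).2⟩
  refine ⟨e i, (mem_filter.1 (s.orderEmbOfFin_mem rfl i)).2, ?_⟩
  rw [countG_eq_card_filter_Iic, hfilter, card_map, Fin.card_Iic]
  exact Nat.sub_add_cancel hr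

lemma countY_eq_countYBefore_add_one {t : Fin N} (h : b t = false) :
    countY b t = countYBefore b t + 1 := by
  simpa [countY_eq_countG_not, countYBefore_eq_countGBefore_not] using
    countG_eq_countGBefore_add_one (fun x => !b x) (t := t) (by simp [h])

lemma countY_le_countYBefore {u v : Fin N} (h : u < v) : countY b u ≤ countYBefore b v := by
  simpa [countY_eq_countG_not, countYBefore_eq_countGBefore_not] using
    countG_le_countGBefore (fun x => !b x) h

lemma countYBefore_mono {u v : Fin N} (h : u ≤ v) : countYBefore b u ≤ countYBefore b v := by
  simpa [countYBefore_eq_countGBefore_not] using countGBefore_mono (fun x => !b x) h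

lemma exists_countY_eq {r : ℕ} (hr : 1 ≤ r) (hrb : r ≤ #{t | b t = false}) :
    ∃ t, b t = false ∧ countY b t = r := by
  simpa [countY_eq_countG_not] using exists_countG_eq (fun x => !b x) hr (by simpa using hrb)

end Counting

section Pivot

variable {N : ℕ} {b : Fin N → Bool} {t₀ : Fin N} {j : ℕ}

lemma exists_countY_eq_lt (hj : 1 ≤ j) (hjt₀ : j ≤ countYBefore b t₀) :
    ∃ t, b t = false ∧ countY b t = j ∧ t < t₀ := by
  obtain ⟨t, hbt, hjt⟩ := exists_countY_eq b hj (hjt₀.trans (countYBefore_le_card b t₀))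
  refine ⟨t, hbt, hjt, lt_of_not_ge fun hle => ?_⟩
  have := countYBefore_mono b hle
  have := countY_eq_countYBefore_add_one b hbt
  omega

lemma exists_countY_eq_gt (ht₀ : b t₀ = true) (hjt₀ : countYBefore b t₀ < j)
    (hj : j ≤ #{t | b t = false}) : ∃ t, b t = false ∧ countY b t = j ∧ t₀ < t := by
  obtain ⟨t, hbt, hjt⟩ := exists_countY_eq b (r := j) (by omega) hj
  refine ⟨t, hbt, hjt, lt_of_not_ge fun hle => ?_⟩
  have hlt : t < t₀ := lt_of_le_of_ne hle (by rintro rfl; simp [hbt] at ht₀)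
  have := countY_le_countYBefore b hlt
  omega

end Pivot

def blockSchedule {N : ℕ} (k n : ℕ) (t : Fin N) : Bool :=
  decide (k ≤ t.val ∧ t.val < k + n)

section Block

variable {N k n : ℕ}

lemma card_blockSchedule (h : k + n ≤ N) : #{t : Fin N | blockSchedule k n t = true} = n := by
  rw [card_filter_fin_eq_card (s := Ico k (k + n)) (fun v hv => by rw [mem_Ico] at hv; omega)
    (fun t => by simp [blockSchedule])]
  simp

lemma contiguous_blockSchedule : contiguous (blockSchedule (N := N) k n) := by
  intro t₁ t₂ t₃ h₁₂ h₂₃ h₁ h₃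
  simp only [blockSchedule, decide_eq_true_eq, Fin.le_def] at *
  omega

lemma countG_blockSchedule (t : Fin N) :
    countG (blockSchedule k n) t = min ((t : ℕ) + 1) (k + n) - k := by
  rw [countG, card_filter_fin_eq_card (s := Ico k (min ((t : ℕ) + 1) (k + n)))
    (fun v hv => by rw [mem_Ico] at hv; omega)
    (fun t' => by simp only [blockSchedule, mem_Ico, decide_eq_true_eq, Fin.le_def]; omega)]
  simp

lemma countGBefore_blockSchedule (t : Fin N) :
    countGBefore (blockSchedule k n) t = min (t : ℕ) (k + n) - k := by
  rw [countGBefore, card_filter_fin_eq_card (s := Ico k (min (t : ℕ) (k + n)))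
    (fun v hv => by rw [mem_Ico] at hv; omega)
    (fun t' => by simp only [blockSchedule, mem_Ico, decide_eq_true_eq, Fin.lt_def]; omega)]
  simp

variable {sg tg sy ty : ℕ → ℝ} {t : Fin N}

lemma stableAt_blockSchedule_of_lt (h : ↑t < k) :
    stableAt sg tg sy ty (blockSchedule k n) t = sy (t + 1) + tg 0 := by
  have hY := countG_add_countY (blockSchedule k n) t
  have hbt : blockSchedule k n t = false := by simp [blockSchedule]; omega
  rw [countG_blockSchedule] at hY
  rw [stableAt, if_neg (by simp [hbt]), countGBefore_blockSchedule]
  congr 2 <;> omega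

lemma stableAt_blockSchedule_of_mem (h₁ : k ≤ ↑t) (h₂ : ↑t < k + n) :
    stableAt sg tg sy ty (blockSchedule k n) t = sg (t + 1 - k) + ty k := by
  have hY := countGBefore_add_countYBefore (blockSchedule k n) t
  have hbt : blockSchedule k n t = true := by simp [blockSchedule]; omega
  rw [countGBefore_blockSchedule] at hY
  rw [stableAt, if_pos hbt, countG_blockSchedule]
  congr 2 <;> omega

lemma stableAt_blockSchedule_of_le (h : k + n ≤ ↑t) :
    stableAt sg tg sy ty (blockSchedule k n) t = sy (t + 1 - n) + tg n := by
  have hY := countG_add_countY (blockSchedule k n) t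
  have hbt : blockSchedule k n t = false := by simp [blockSchedule]; omega
  rw [countG_blockSchedule] at hY
  rw [stableAt, if_neg (by simp [hbt]), countGBefore_blockSchedule]
  congr 2 <;> omega

end Block

lemma exists_stableAt_blockSchedule_le {N n : ℕ} {sg tg sy ty : ℕ → ℝ} {b : Fin N → Bool}
    {t₀ : Fin N} (ht : ∀ i, 1 ≤ i → i < n → tg 0 ≤ tg i ∧ tg n ≤ tg i)
    (hb : #{t | b t = true} = n) (ht₀ : b t₀ = true)
    (hmin : ∀ t, b t = true → ty (countYBefore b t₀) ≤ ty (countYBefore b t)) (t : Fin N) :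
    ∃ t', stableAt sg tg sy ty (blockSchedule (countYBefore b t₀) n) t ≤
      stableAt sg tg sy ty b t' := by
  set k := countYBefore b t₀
  have htg₀ : ∀ d < n, tg 0 ≤ tg d := fun d hd =>
    (Nat.eq_zero_or_pos d).elim (fun h => h ▸ le_rfl) fun h => (ht d h hd).1
  have htgn : ∀ d, 1 ≤ d → d ≤ n → tg n ≤ tg d := fun d h₁ h₂ =>
    h₂.lt_or_eq.elim (fun h => (ht d h₁ h).2) fun h => h ▸ le_rfl
  have hcount₀ := countG_eq_countGBefore_add_one b ht₀
  have hcard : #{t | b t = false} = N - n := by rw [card_filter_eq_false, hb]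
  have hkN := countYBefore_le_card b t₀
  rcases lt_or_ge (t : ℕ) k with htk | hkt
  · obtain ⟨t', hbt', hjt', hlt⟩ := exists_countY_eq_lt (j := t + 1) (by omega) htk
    refine ⟨t', ?_⟩
    rw [stableAt_blockSchedule_of_lt htk, stableAt, if_neg (by simp [hbt']), hjt']
    have := countGBefore_mono b hlt.le
    have := countG_le_card b t₀
    exact add_le_add_right (htg₀ _ (by omega)) _
  rcases lt_or_ge (t : ℕ) (k + n) with htn | hnt
  · obtain ⟨t', hbt', hit'⟩ := exists_countG_eq b (r := t + 1 - k) (by omega) (by omega)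
    refine ⟨t', ?_⟩
    rw [stableAt_blockSchedule_of_mem hkt htn, stableAt, if_pos hbt', hit']
    exact add_le_add_right (hmin t' hbt') _
  · obtain ⟨t', hbt', hjt', hlt⟩ := exists_countY_eq_gt (j := t + 1 - n) ht₀ (by omega)
      (by omega)
    refine ⟨t', ?_⟩
    rw [stableAt_blockSchedule_of_le hnt, stableAt, if_neg (by simp [hbt']), hjt']
    have := countG_le_countGBefore b hlt
    have := countGBefore_le_card b t'
    exact add_le_add_right (htgn _ (by omega) (by omega)) _

/-- if the intermediate transient footprints of `g` never dip below
the input transient `tg 0` and the output transient `tg n`, then every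
interleaving of `g` with the parallel operators `Y` has peak memory at least
that of some interleaving executing all of `g` contiguously; hence fusing `g`
preserves the optimal peak memory. -/
theorem stmt_5 (n m : ℕ) (hn : 0 < n) (sg tg sy ty : ℕ → ℝ)
    (ht : ∀ i, 1 ≤ i → i < n → tg 0 ≤ tg i ∧ tg n ≤ tg i)
    (b : Fin (n + m) → Bool)
    (hb : (Finset.univ.filter (fun t : Fin (n + m) => b t = true)).card = n) :
    ∃ b' : Fin (n + m) → Bool,
      (Finset.univ.filter (fun t : Fin (n + m) => b' t = true)).card = n ∧
      contiguous b' ∧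
      peakMem sg tg sy ty b' ≤ peakMem sg tg sy ty b := by
  obtain ⟨t₀, ht₀, hmin⟩ := exists_min_image {t | b t = true} (fun t => ty (countYBefore b t))
    (card_pos.1 (by rw [hb]; exact hn))
  have hk : countYBefore b t₀ + n ≤ n + m := by
    have := countYBefore_le_card b t₀
    rw [card_filter_eq_false, hb] at this
    omega
  refine ⟨blockSchedule (countYBefore b t₀) n, card_blockSchedule hk, contiguous_blockSchedule,
    ?_⟩
  have : Nonempty (Fin (n + m)) := ⟨⟨0, by omega⟩⟩
  unfold peakMem
  exact ciSup_mono_of_forall_exists (Set.finite_range _).bddAbove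
    (exists_stableAt_blockSchedule_le ht hb (mem_filter.1 ht₀).2
      fun t h => hmin t (mem_filter.2 ⟨mem_univ t, h⟩))
end

section
/- In the ILP formulation, suppose binary variables O_{i,j} and T_{i,j} satisfy: (i) O is a permutation matrix; (ii) O_{i,j} ≤ T_{k,j} for every k ∈ IN(i) (inputs of i); (iii) T_{i,j} ≤ T_{i,j−1} + O_{i,j} for all i, j ≥ 1; (iv) T_{i,0} = 0 for every non-input tensor i. Then the schedule σ induced by O respects all precedence constraints: for every operator i and every producer k of an input tensor of i, σ(k) < σ(i). -/
/-! A tensor that is live at some step must have been produced at or before that step: walking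
back from a live step, constraint (iii) either finds the producer scheduled there or passes the
liveness one step back, and (iv) stops the walk before step 0. The input tensor `k` of operator
`i` is live at step `σ i`, so `σ k ≤ σ i`, and equality is excluded because step `σ i` schedules
only one operator. -/

namespace Finset

theorem eq_of_sum_eq_one {ι : Type*} {s : Finset ι} {f : ι → ℕ} (hsum : ∑ x ∈ s, f x = 1)
    {a b : ι} (ha : a ∈ s) (hb : b ∈ s) (hfa : f a ≠ 0) (hfb : f b ≠ 0) : a = b := by
  classical
  by_contra hab
  have hle : ∑ x ∈ {a, b}, f x ≤ ∑ x ∈ s, f x :=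
    sum_le_sum_of_subset (insert_subset ha (singleton_subset_iff.mpr hb))
  rw [sum_pair hab, hsum] at hle
  omega

end Finset

theorem exists_ne_zero_le_of_ne_zero {T O : ℕ → ℕ} (hinit : T 0 = 0)
    (hlive : ∀ j, 1 ≤ j → T j ≤ T (j - 1) + O j) :
    ∀ j, T j ≠ 0 → ∃ j', 1 ≤ j' ∧ j' ≤ j ∧ O j' ≠ 0
  | 0, hT => absurd hinit hT
  | j + 1, hT => by
    by_cases hO : O (j + 1) = 0
    · have hTj : T j ≠ 0 := by
        have := hlive (j + 1) (by omega)
        simp only [Nat.add_sub_cancel, hO] at this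
        omega
      obtain ⟨j', hj'1, hj'j, hOj'⟩ := exists_ne_zero_le_of_ne_zero hinit hlive j hTj
      exact ⟨j', hj'1, by omega, hOj'⟩
    · exact ⟨j + 1, by omega, le_rfl, hO⟩

theorem stmt_9_general {V : Type*} [Fintype V] (O T : V → ℕ → ℕ) (IN : V → Finset V)
    (INPUT : Set V)
    (hcol : ∀ j ∈ Finset.Icc 1 (Fintype.card V), ∑ i : V, O i j = 1)
    (hrow : ∀ i : V, ∑ j ∈ Finset.Icc 1 (Fintype.card V), O i j = 1)
    (hprec : ∀ (i : V) (j : ℕ), ∀ k ∈ IN i, O i j ≤ T k j)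
    (hlive : ∀ (i : V) (j : ℕ), 1 ≤ j → T i j ≤ T i (j - 1) + O i j)
    (hnoself : ∀ i : V, i ∉ IN i)
    (hINnoninput : ∀ i : V, ∀ k ∈ IN i, k ∉ INPUT)
    (hinit : ∀ i : V, i ∉ INPUT → T i 0 = 0) :
    ∀ σ : V → ℕ, (∀ i : V, σ i ∈ Finset.Icc 1 (Fintype.card V) ∧ O i (σ i) = 1) →
      ∀ i : V, ∀ k ∈ IN i, σ k < σ i := by
  intro σ hσ i k hk
  obtain ⟨hσi, hOi⟩ := hσ i
  obtain ⟨hσk, hOk⟩ := hσ k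
  have hlive_k : T k (σ i) ≠ 0 := by
    have := hprec i (σ i) k hk
    omega
  obtain ⟨j, hj1, hji, hOkj⟩ :=
    exists_ne_zero_le_of_ne_zero (hinit k (hINnoninput i k hk)) (hlive k) (σ i) hlive_k
  have hj : j ∈ Finset.Icc 1 (Fintype.card V) := by
    simp only [Finset.mem_Icc] at hσi ⊢
    omega
  have hσk_eq : σ k = j := Finset.eq_of_sum_eq_one (hrow k) hσk hj (by omega) hOkj
  have hσk_ne : σ k ≠ σ i := fun h =>
    hnoself i <| Finset.eq_of_sum_eq_one (hcol (σ i) hσi) (Finset.mem_univ k)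
      (Finset.mem_univ i) (by rw [← h]; omega) (by omega) ▸ hk
  omega

/-- ILP topological constraints imply precedence. If `O` is a 0-1
permutation matrix over steps `{1,...,|V|}`, `T` is 0-1, `O i j ≤ T k j` for
every input `k ∈ IN i`, `T i j ≤ T i (j-1) + O i j`, and `T i 0 = 0` for every
non-input tensor, then the induced schedule `σ` (where `O i (σ i) = 1`)
satisfies `σ k < σ i` for every operator `i` and every producer `k` of one of
its input tensors. -/
theorem stmt_9 {V : Type*} [Fintype V] (O T : V → ℕ → ℕ) (IN : V → Finset V)
    (INPUT : Set V)
    (hObin : ∀ (i : V) (j : ℕ), O i j = 0 ∨ O i j = 1)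
    (hTbin : ∀ (i : V) (j : ℕ), T i j = 0 ∨ T i j = 1)
    (hcol : ∀ j ∈ Finset.Icc 1 (Fintype.card V), ∑ i : V, O i j = 1)
    (hrow : ∀ i : V, ∑ j ∈ Finset.Icc 1 (Fintype.card V), O i j = 1)
    (hprec : ∀ (i : V) (j : ℕ), ∀ k ∈ IN i, O i j ≤ T k j)
    (hlive : ∀ (i : V) (j : ℕ), 1 ≤ j → T i j ≤ T i (j - 1) + O i j)
    (hnoself : ∀ i : V, i ∉ IN i)
    (hINnoninput : ∀ i : V, ∀ k ∈ IN i, k ∉ INPUT)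
    (hinit : ∀ i : V, i ∉ INPUT → T i 0 = 0) :
    ∀ σ : V → ℕ, (∀ i : V, σ i ∈ Finset.Icc 1 (Fintype.card V) ∧ O i (σ i) = 1) →
      ∀ i : V, ∀ k ∈ IN i, σ k < σ i :=
  stmt_9_general O T IN INPUT hcol hrow hprec hlive hnoself hINnoninput hinit
end

section
/- Conversely, every topological schedule σ of the computation graph induces a feasible solution of the ILP: setting O_{i,j} = 1 iff σ(i) = j, and T_{i,j} = 1 iff σ(i) ≤ j ≤ max over consumers c of i of σ(c) (tensor live from production to last use), satisfies the constraints Σ_i O_{i,j} = 1, Σ_j O_{i,j} = 1, O_{i,j} ≤ T_{k,j} for k ∈ IN(i), T_{i,j} ≤ T_{i,j−1} + O_{i,j}, and T_{i,0} = 0 for non-input tensors. -/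
theorem Set.BijOn.sum_ite_apply_eq {V β : Type*} [Fintype V] [AddCommMonoidWithOne β]
    {σ : V → ℕ} {s : Set ℕ} (h : Set.BijOn σ Set.univ s) {j : ℕ} (hj : j ∈ s) :
    ∑ i : V, (if σ i = j then 1 else 0 : β) = 1 := by
  obtain ⟨i, -, rfl⟩ := h.surjOn hj
  rw [Fintype.sum_eq_single i fun b hb => if_neg fun hσ =>
    hb (h.injOn (Set.mem_univ b) (Set.mem_univ i) hσ)]
  exact if_pos rfl

theorem ite_mem_Icc_le_ite_mem_Icc_pred_add (a b j : ℕ) :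
    (if a ≤ j ∧ j ≤ b then 1 else 0 : ℕ) ≤
      (if a ≤ j - 1 ∧ j - 1 ≤ b then 1 else 0) + if a = j then 1 else 0 := by
  split_ifs <;> omega

/-- every topological schedule `σ` induces a feasible ILP
solution: `O i j = 1` iff `σ i = j`, and `T i j = 1` iff
`σ i ≤ j ≤ max over consumers c of i of σ c` (tensor live from production to
last use); these satisfy all the topological ILP constraints. -/
theorem stmt_10 {V : Type*} [Fintype V] [DecidableEq V] (IN : V → Finset V)
    (INPUT : Set V) (σ : V → ℕ)
    (hbij : Set.BijOn σ Set.univ (Set.Icc 1 (Fintype.card V)))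
    (htopo : ∀ i : V, ∀ k ∈ IN i, σ k < σ i) :
    let O : V → ℕ → ℕ := fun i j => if σ i = j then 1 else 0
    let last : V → ℕ := fun k =>
      max (σ k) ((Finset.univ.filter (fun i : V => k ∈ IN i)).sup σ)
    let T : V → ℕ → ℕ := fun k j => if σ k ≤ j ∧ j ≤ last k then 1 else 0
    (∀ j ∈ Finset.Icc 1 (Fintype.card V), ∑ i : V, O i j = 1) ∧
    (∀ i : V, ∑ j ∈ Finset.Icc 1 (Fintype.card V), O i j = 1) ∧
    (∀ (i : V) (j : ℕ), ∀ k ∈ IN i, O i j ≤ T k j) ∧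
    (∀ (i : V) (j : ℕ), 1 ≤ j → T i j ≤ T i (j - 1) + O i j) ∧
    (∀ i : V, i ∉ INPUT → T i 0 = 0) := by
  intro O last T
  have hσ_pos (i : V) : 1 ≤ σ i := (hbij.mapsTo (Set.mem_univ i)).1
  refine ⟨fun j hj => hbij.sum_ite_apply_eq (by simpa using hj), fun i => ?_,
    fun i j k hk => ?_, fun i j _ => ite_mem_Icc_le_ite_mem_Icc_pred_add _ _ j,
    fun i _ => if_neg (by have := hσ_pos i; omega)⟩
  · rw [Finset.sum_ite_eq, if_pos (by simpa using hbij.mapsTo (Set.mem_univ i))]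
  · have hlive : σ k ≤ σ i ∧ σ i ≤ last k :=
      ⟨(htopo i k hk).le, le_max_of_le_right (Finset.le_sup (by simpa using hk))⟩
    simp only [O, T]
    split_ifs <;> omega
end

section
/- Variable pruning soundness: in any feasible solution of the ILP topological constraints, O_{i,j} = 0 for all j ≤ |anc(i)| and for all j > |V| − |des(i)|; moreover T_{i,j} = 0 for all j ≤ |anc(i)|. Hence adding these equalities as constraints does not change the set of feasible schedules or the optimal peak memory. -/
/-!
Row and column sums make `O` the matrix of a bijection `t` from operators onto the steps
`1, …, |V|`. Along an edge `k → i` the input `k` must be live when `i` runs, and liveness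
requires `k` to have run already, so `t k < t i`; acyclicity and injectivity make this strict.
Hence `t` is strictly increasing along paths and maps the ancestors of `i` injectively into
`[1, t i)` and its descendants into `(t i, |V|]`, which gives `|anc i| < t i ≤ |V| - |des i|`.
-/

open Finset Relation

theorem Finset.eq_of_sum_eq_one_s11 {ι : Type*} {s : Finset ι} {f : ι → ℕ}
    (hs : ∑ i ∈ s, f i = 1) {a b : ι} (ha : a ∈ s) (hb : b ∈ s)
    (hfa : f a ≠ 0) (hfb : f b ≠ 0) : a = b := by
  classical
  by_contra hab
  have : f a + f b ≤ ∑ i ∈ s, f i := by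
    rw [← sum_pair hab]
    exact sum_le_sum_of_subset (insert_subset ha (singleton_subset_iff.mpr hb))
  omega

theorem Relation.TransGen.lt_of_map {V α : Type*} [Preorder α] {E : V → V → Prop}
    {t : V → α} (hE : ∀ u v, E u v → t u < t v) {u v : V} (h : TransGen E u v) :
    t u < t v := by
  simpa [transGen_eq_self] using h.lift t hE

section Counting

variable {V : Type*} {E : V → V → Prop} {t : V → ℕ}

theorem ncard_transGen_left_le (ht : t.Injective) (hE : ∀ u v, E u v → t u < t v)
    {m : ℕ} (hm : ∀ v, m ≤ t v) (i : V) : {u | TransGen E u i}.ncard ≤ t i - m := by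
  rw [← Set.ncard_Ico_nat]
  exact Set.ncard_le_ncard_of_injOn t (fun u hu => ⟨hm u, hu.lt_of_map hE⟩)
    ht.injOn (Set.finite_Ico _ _)

theorem ncard_transGen_right_le (ht : t.Injective) (hE : ∀ u v, E u v → t u < t v)
    {n : ℕ} (hn : ∀ v, t v ≤ n) (i : V) : {u | TransGen E i u}.ncard ≤ n - t i := by
  rw [← Set.ncard_Ioc_nat]
  exact Set.ncard_le_ncard_of_injOn t (fun u hu => ⟨hu.lt_of_map hE, hn u⟩)
    ht.injOn (Set.finite_Ioc _ _)

end Counting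

section Schedule

variable {V : Type*} {O T : V → ℕ → ℕ} {t : V → ℕ}

theorem exists_step_of_sum_eq_one [Fintype V]
    (hObin : ∀ i j, O i j = 0 ∨ O i j = 1)
    (hcol : ∀ j ∈ Icc 1 (Fintype.card V), ∑ i, O i j = 1)
    (hrow : ∀ i, ∑ j ∈ Icc 1 (Fintype.card V), O i j = 1)
    (hOsupp : ∀ i j, O i j = 1 → j ∈ Icc 1 (Fintype.card V)) :
    ∃ t : V → ℕ, t.Injective ∧ (∀ i, t i ∈ Icc 1 (Fintype.card V)) ∧
      ∀ i j, O i j = 1 ↔ j = t i := by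
  have hex : ∀ i, ∃ j ∈ Icc 1 (Fintype.card V), O i j = 1 := fun i => by
    obtain ⟨j, hj, hne⟩ := exists_ne_zero_of_sum_ne_zero (by rw [hrow i]; exact one_ne_zero)
    exact ⟨j, hj, (hObin i j).resolve_left hne⟩
  choose t ht_mem ht using hex
  refine ⟨t, fun a b hab => ?_, ht_mem, fun i j => ⟨fun h => ?_, fun h => h ▸ ht i⟩⟩
  · have hb : O b (t a) = 1 := hab ▸ ht b
    exact eq_of_sum_eq_one_s11 (hcol (t a) (ht_mem a)) (mem_univ a) (mem_univ b)
      (by simp [ht a]) (by simp [hb])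
  · exact eq_of_sum_eq_one_s11 (hrow i) (hOsupp i j h) (ht_mem i)
      (by simp [h]) (by simp [ht i])

theorem step_le_of_live (hOt : ∀ i j, O i j = 1 → j = t i)
    (hliveprod : ∀ i j, T i j = 1 → ∃ j' ≤ j, O i j' = 1) {i : V} {j : ℕ}
    (hT : T i j = 1) : t i ≤ j := by
  obtain ⟨j', hj', hO⟩ := hliveprod i j hT
  exact hOt i j' hO ▸ hj'

theorem step_lt_of_edge {E : V → V → Prop} (hacyc : ∀ v, ¬ TransGen E v v)
    (ht : t.Injective) (hOt : ∀ i j, O i j = 1 ↔ j = t i)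
    (hTbin : ∀ i j, T i j = 0 ∨ T i j = 1)
    (hprec : ∀ i j, ∀ k, E k i → O i j ≤ T k j)
    (hliveprod : ∀ i j, T i j = 1 → ∃ j' ≤ j, O i j' = 1) {k i : V} (hki : E k i) :
    t k < t i := by
  have hlive : T k (t i) = 1 := by
    have := hprec i (t i) k hki
    rw [(hOt i (t i)).2 rfl] at this
    exact (hTbin k (t i)).resolve_left (by omega)
  refine (step_le_of_live (hOt · · |>.1) hliveprod hlive).lt_of_ne fun heq => ?_
  exact hacyc i (.single (ht heq ▸ hki))

end Schedule

theorem stmt_11_general {V : Type*} [Fintype V] (E : V → V → Prop)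
    (hacyc : ∀ v : V, ¬ Relation.TransGen E v v)
    (O T : V → ℕ → ℕ)
    (hObin : ∀ (i : V) (j : ℕ), O i j = 0 ∨ O i j = 1)
    (hTbin : ∀ (i : V) (j : ℕ), T i j = 0 ∨ T i j = 1)
    (hcol : ∀ j ∈ Finset.Icc 1 (Fintype.card V), ∑ i : V, O i j = 1)
    (hrow : ∀ i : V, ∑ j ∈ Finset.Icc 1 (Fintype.card V), O i j = 1)
    (hOsupp : ∀ (i : V) (j : ℕ), O i j = 1 → j ∈ Finset.Icc 1 (Fintype.card V))
    (hprec : ∀ (i : V) (j : ℕ), ∀ k : V, E k i → O i j ≤ T k j)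
    (hliveprod : ∀ (i : V) (j : ℕ), T i j = 1 → ∃ j' ≤ j, O i j' = 1) :
    ∀ (i : V) (j : ℕ),
      (j ≤ {u : V | Relation.TransGen E u i}.ncard → O i j = 0 ∧ T i j = 0) ∧
      (Fintype.card V - {u : V | Relation.TransGen E i u}.ncard < j → O i j = 0) := by
  obtain ⟨t, ht, ht_mem, hOt⟩ := exists_step_of_sum_eq_one hObin hcol hrow hOsupp
  have hE : ∀ u v, E u v → t u < t v := fun _ _ =>
    step_lt_of_edge hacyc ht hOt hTbin hprec hliveprod
  have hO_zero : ∀ i j, j ≠ t i → O i j = 0 := fun i j hj =>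
    (hObin i j).resolve_right (mt (hOt i j).1 hj)
  have hT_zero : ∀ i j, j < t i → T i j = 0 := fun i j hj =>
    (hTbin i j).resolve_right fun h => (step_le_of_live (hOt · · |>.1) hliveprod h).not_gt hj
  intro i j
  obtain ⟨ht_pos, ht_le⟩ := mem_Icc.1 (ht_mem i)
  have hanc := ncard_transGen_left_le ht hE (fun v => (mem_Icc.1 (ht_mem v)).1) i
  have hdes := ncard_transGen_right_le ht hE (fun v => (mem_Icc.1 (ht_mem v)).2) i
  exact ⟨fun hj => ⟨hO_zero i j (by omega), hT_zero i j (by omega)⟩,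
    fun hj => hO_zero i j (by omega)⟩

/-- variable-pruning soundness. In any feasible solution of the
ILP topological constraints for a DAG `E` (inputs of operator `i` are its
direct predecessors), we have `O i j = 0` for all `j ≤ |anc(i)|` and for all
`j > |V| − |des(i)|`, and moreover `T i j = 0` for all `j ≤ |anc(i)|`; hence
adding these equalities as constraints does not change the feasible set. -/
theorem stmt_11 {V : Type*} [Fintype V] (E : V → V → Prop)
    (hacyc : ∀ v : V, ¬ Relation.TransGen E v v)
    (O T : V → ℕ → ℕ)
    (hObin : ∀ (i : V) (j : ℕ), O i j = 0 ∨ O i j = 1)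
    (hTbin : ∀ (i : V) (j : ℕ), T i j = 0 ∨ T i j = 1)
    (hcol : ∀ j ∈ Finset.Icc 1 (Fintype.card V), ∑ i : V, O i j = 1)
    (hrow : ∀ i : V, ∑ j ∈ Finset.Icc 1 (Fintype.card V), O i j = 1)
    (hOsupp : ∀ (i : V) (j : ℕ), O i j = 1 → j ∈ Finset.Icc 1 (Fintype.card V))
    (hprec : ∀ (i : V) (j : ℕ), ∀ k : V, E k i → O i j ≤ T k j)
    (hlive : ∀ (i : V) (j : ℕ), 1 ≤ j → T i j ≤ T i (j - 1) + O i j)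
    (hliveprod : ∀ (i : V) (j : ℕ), T i j = 1 → ∃ j' ≤ j, O i j' = 1) :
    ∀ (i : V) (j : ℕ),
      (j ≤ {u : V | Relation.TransGen E u i}.ncard → O i j = 0 ∧ T i j = 0) ∧
      (Fintype.card V - {u : V | Relation.TransGen E i u}.ncard < j → O i j = 0) :=
  stmt_11_general E hacyc O T hObin hTbin hcol hrow hOsupp hprec hliveprod
end

section
/- Schedule lifting after fusion: let G be a DAG and U ⊆ V a convex set contracted to hypernode v_g yielding DAG G_f. Given any topological schedule σ_f of G_f and any topological schedule σ_U of the induced subgraph G_U, the schedule of G obtained by replacing v_g in σ_f by the sequence σ_U is a topological schedule of G. -/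
/-- Edge relation of the graph obtained from `E` by contracting the vertex set
`U` to a single hypernode (represented by `none`); vertices outside `U` are
represented by `some`; self-loops at the hypernode are discarded. -/
def contractRel {V : Type*} [DecidableEq V] (E : V → V → Prop) (U : Finset V) :
    Option {v : V // v ∉ U} → Option {v : V // v ∉ U} → Prop
  | some a, some b => E a.1 b.1
  | some a, none => ∃ u ∈ U, E a.1 u
  | none, some b => ∃ u ∈ U, E u b.1
  | none, none => False

/-!
Order the vertices of `G` lexicographically by the key (position of the block in `σf`,
position inside the block in `σU`), where a vertex outside `U` is its own block. The key is
injective, so it induces the schedule. An edge inside `U` increases the inner position within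
the hypernode's block, and any other edge is an edge of the contracted graph, so it increases
the block position.
-/

def fusedKey {V : Type*} [DecidableEq V] {U : Finset V} (f : Option {v : V // v ∉ U} → ℕ)
    (g : {v : V // v ∈ U} → ℕ) (v : V) : ℕ ×ₗ ℕ :=
  toLex (if h : v ∈ U then (f none, g ⟨v, h⟩) else (f (some ⟨v, h⟩), 0))

section FusedKey

variable {V : Type*} [DecidableEq V] {U : Finset V}
  {f : Option {v : V // v ∉ U} → ℕ} {g : {v : V // v ∈ U} → ℕ}

theorem fusedKey_injective (hf : Function.Injective f) (hg : Function.Injective g) :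
    Function.Injective (fusedKey f g) := by
  intro a b hab
  simp only [fusedKey, toLex_inj] at hab
  by_cases ha : a ∈ U <;> by_cases hb : b ∈ U <;>
    simp only [ha, hb, dite_true, dite_false, Prod.mk.injEq] at hab
  · simpa using hg hab.2
  · exact absurd (hf hab.1) (by simp)
  · exact absurd (hf hab.1) (by simp)
  · simpa using hf hab.1

theorem fusedKey_lt_of_rel {E : V → V → Prop}
    (hf : ∀ a b, contractRel E U a b → f a < f b) (hg : ∀ a b : {v : V // v ∈ U}, E a b → g a < g b)
    {u v : V} (huv : E u v) : fusedKey f g u < fusedKey f g v := by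
  simp only [fusedKey, Prod.Lex.toLex_lt_toLex]
  by_cases hu : u ∈ U <;> by_cases hv : v ∈ U
  · rw [dif_pos hu, dif_pos hv]
    exact Or.inr ⟨rfl, hg ⟨u, hu⟩ ⟨v, hv⟩ huv⟩
  · rw [dif_pos hu, dif_neg hv]
    exact Or.inl (hf none (some ⟨v, hv⟩) ⟨u, hu, huv⟩)
  · rw [dif_neg hu, dif_pos hv]
    exact Or.inl (hf (some ⟨u, hu⟩) none ⟨v, hv, huv⟩)
  · rw [dif_neg hu, dif_neg hv]
    exact Or.inl (hf (some ⟨u, hu⟩) (some ⟨v, hv⟩) huv)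

end FusedKey

theorem exists_equiv_fin_lt_iff_of_injective {α β : Type*} [Fintype α] [LinearOrder β]
    {k : α → β} (hk : Function.Injective k) :
    ∃ σ : α ≃ Fin (Fintype.card α), ∀ a b, σ a < σ b ↔ k a < k b := by
  let : LinearOrder α := LinearOrder.lift' k hk
  exact ⟨(monoEquivOfFin α rfl).symm.toEquiv, fun a b => (monoEquivOfFin α rfl).symm.lt_iff_lt⟩

theorem stmt_15_general {V : Type*} [Fintype V] [DecidableEq V] (E : V → V → Prop)
    (U : Finset V)
    (σf : Option {v : V // v ∉ U} ≃ Fin (Fintype.card (Option {v : V // v ∉ U})))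
    (hσf : ∀ a b : Option {v : V // v ∉ U}, contractRel E U a b → (σf a : ℕ) < (σf b : ℕ))
    (σU : {v : V // v ∈ U} ≃ Fin (Fintype.card {v : V // v ∈ U}))
    (hσU : ∀ a b : {v : V // v ∈ U}, E a.1 b.1 → (σU a : ℕ) < (σU b : ℕ)) :
    let ρ : V → ℕ × ℕ := fun v =>
      if h : v ∈ U then ((σf none : ℕ), (σU ⟨v, h⟩ : ℕ))
      else ((σf (some ⟨v, h⟩) : ℕ), 0)
    ∃ σ : V ≃ Fin (Fintype.card V),
      (∀ u v : V, E u v → (σ u : ℕ) < (σ v : ℕ)) ∧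
      ∀ a b : V, (σ a : ℕ) < (σ b : ℕ) ↔
        ((ρ a).1 < (ρ b).1 ∨ ((ρ a).1 = (ρ b).1 ∧ (ρ a).2 < (ρ b).2)) := by
  intro ρ
  obtain ⟨σ, hσ⟩ := exists_equiv_fin_lt_iff_of_injective
    (fusedKey_injective (Fin.val_injective.comp σf.injective) (Fin.val_injective.comp σU.injective))
  exact ⟨σ, fun u v huv => (hσ u v).2 (fusedKey_lt_of_rel hσf hσU huv),
    fun a b => (hσ a b).trans (Prod.Lex.toLex_lt_toLex (x := ρ a) (y := ρ b))⟩

/-- schedule lifting after fusion. Given a convex set `U`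
contracted to the hypernode, any topological schedule `σf` of the contracted
graph and any topological schedule `σU` of the induced subgraph `G_U` combine
(by replacing the hypernode with the sequence `σU`, i.e. ordering `V`
lexicographically by the contracted position and then the inner position) into
a topological schedule of `G`. -/
theorem stmt_15 {V : Type*} [Fintype V] [DecidableEq V] (E : V → V → Prop)
    (hacyc : ∀ v : V, ¬ Relation.TransGen E v v) (U : Finset V)
    (hconv : ∀ x : V, x ∉ U →
      ¬ ((∃ u ∈ U, Relation.TransGen E u x) ∧ (∃ w ∈ U, Relation.TransGen E x w)))
    (σf : Option {v : V // v ∉ U} ≃ Fin (Fintype.card (Option {v : V // v ∉ U})))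
    (hσf : ∀ a b : Option {v : V // v ∉ U}, contractRel E U a b → (σf a : ℕ) < (σf b : ℕ))
    (σU : {v : V // v ∈ U} ≃ Fin (Fintype.card {v : V // v ∈ U}))
    (hσU : ∀ a b : {v : V // v ∈ U}, E a.1 b.1 → (σU a : ℕ) < (σU b : ℕ)) :
    let ρ : V → ℕ × ℕ := fun v =>
      if h : v ∈ U then ((σf none : ℕ), (σU ⟨v, h⟩ : ℕ))
      else ((σf (some ⟨v, h⟩) : ℕ), 0)
    ∃ σ : V ≃ Fin (Fintype.card V),
      (∀ u v : V, E u v → (σ u : ℕ) < (σ v : ℕ)) ∧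
      ∀ a b : V, (σ a : ℕ) < (σ b : ℕ) ↔
        ((ρ a).1 < (ρ b).1 ∨ ((ρ a).1 = (ρ b).1 ∧ (ρ a).2 < (ρ b).2)) :=
  stmt_15_general E U σf hσf σU hσU
end
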